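/- Let F ⊆ I_uf, Θ ⊆ ℤ^I, and let S = {s_g : g∈Θ} be a Θ-pointed family such that A^Θ is closed under multiplication. Then the ℤ-submodule frz_F^S A^Θ := ⊕_{g∈Θ} ℤ·frz_{F,g}(s_g) of LP is closed under multiplication. More precisely, if s_{g₁}·s_{g₂} = Σ_{g∈Θ} b^g·s_g is a finite decomposition with integer coefficients, then frz_{F,g₁}(s_{g₁}) · frz_{F,g₂}(s_{g₂}) = Σ_{g∈Θ} b^g·frz_{F,g₁+g₂}(s_g), where each frz_{F,g₁+g₂}(s_g) is either 0 or equal to frz_{F,g}(s_g). -/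

import Mathlib

/-!
Freezing at `m` keeps exactly the monomials `x^{m+p*(n)}` with `supp n ∩ F = ∅`. Since
`supp (n₁ + n₂) = supp n₁ ∪ supp n₂`, freezing is multiplicative on `LP_{⪯m₁} × LP_{⪯m₂}`:
`frz_{F,m₁+m₂}(z₁ z₂) = frz_{F,m₁}(z₁) frz_{F,m₂}(z₂)`. Applying `frz_{F,g₁+g₂}` to
`s_{g₁} s_{g₂} = Σ b^g s_g` gives the identity of the theorem.

Every `g` with `b^g ≠ 0` lies in `g₁ + g₂ + p*(ℕ^{I_uf})`: otherwise take such a `g₀` maximal for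
the dominance order (`g ≼ g'` iff `g ∈ g' + p*(ℕ^{I_uf})`) and compare coefficients of `x^{g₀}`.
The left side has none, while on the right pointedness and injectivity of `p*` leave only
`b^{g₀}`. Writing `g = g₁ + g₂ + p*(ν)`, freezing `s_g` at `g₁ + g₂` agrees with freezing it at
`g` if `supp ν ∩ F = ∅` and gives `0` otherwise.
-/

noncomputable section

namespace CAFreeze

variable {I : Type*} [Fintype I] [DecidableEq I]

/-- The Laurent polynomial ring LP = ℤ[x_i^{±1} : i ∈ I], modeled as the group algebra of
ℤ^I over ℤ. -/
abbrev LP (I : Type*) := AddMonoidAlgebra ℤ (I → ℤ)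

/-- The monomial x^m for an exponent vector m ∈ ℤ^I. -/
def mono (m : I → ℤ) : LP I := AddMonoidAlgebra.ofCoeff (Finsupp.single m 1)

/-- The coefficient of the monomial x^m in z ∈ LP. -/
def coeff (z : LP I) (m : I → ℤ) : ℤ := (AddMonoidAlgebra.coeff z : (I → ℤ) →₀ ℤ) m

variable (Iuf : Finset I) (Bt : I → {i // i ∈ Iuf} → ℤ)

/-- The linear map p* : ℤ^{I_uf} → ℤ^I, p*(n) = B̃·n. -/
def pstar (n : {i // i ∈ Iuf} → ℤ) : I → ℤ := fun i => ∑ kk : {i // i ∈ Iuf}, Bt i kk * n kk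

/-- p*(n) for n ∈ ℕ^{I_uf}. -/
def pstarN (n : {i // i ∈ Iuf} → ℕ) : I → ℤ := pstar Iuf Bt fun kk => (n kk : ℤ)

/-- supp n = {k ∈ I_uf : n_k ≠ 0}, as a subset of I. -/
def suppn (n : {i // i ∈ Iuf} → ℕ) : Set I := {i | ∃ h : i ∈ Iuf, n ⟨i, h⟩ ≠ 0}

/-- LP_{⪯m}: the ℤ-submodule of LP spanned by the monomials x^{m+p*(n)}, n ∈ ℕ^{I_uf}. -/
def LPle (m : I → ℤ) : Submodule ℤ (LP I) :=
  Submodule.span ℤ {z : LP I | ∃ n : {i // i ∈ Iuf} → ℕ, z = mono (m + pstarN Iuf Bt n)}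

open Classical in
/-- The freezing operator frz_{F,m}: it keeps the monomials x^{m+p*(n)} with
supp n ∩ F = ∅ and kills the monomials x^{m+p*(n)} with supp n ∩ F ≠ ∅. -/
def frz (F : Finset I) (m : I → ℤ) (z : LP I) : LP I :=
  AddMonoidAlgebra.ofCoeff <| Finsupp.filter
    (fun e => ∃ n : {i // i ∈ Iuf} → ℕ, e = m + pstarN Iuf Bt n ∧ suppn Iuf n ∩ (F : Set I) = ∅) (AddMonoidAlgebra.coeff z)

/-- z ∈ LP is pointed at g: z = Σ_{n ∈ ℕ^{I_uf}} c_n x^{g+p*(n)} with c_0 = 1. -/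
def Pointed (g : I → ℤ) (z : LP I) : Prop :=
  coeff z g = 1 ∧
    ∀ e ∈ (AddMonoidAlgebra.coeff z : (I → ℤ) →₀ ℤ).support, ∃ n : {i // i ∈ Iuf} → ℕ, e = g + pstarN Iuf Bt n

/-- supp z = ∪_{c_n ≠ 0} supp n, for a g-pointed z = Σ_n c_n x^{g+p*(n)}. -/
def suppz (g : I → ℤ) (z : LP I) : Set I :=
  ⋃ n ∈ {n : {i // i ∈ Iuf} → ℕ | coeff z (g + pstarN Iuf Bt n) ≠ 0}, suppn Iuf n

/-- suppDim z ∈ ℕ^{I_uf}: the coordinatewise maximum of {n : c_n ≠ 0}, for a g-pointed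
z = Σ_n c_n x^{g+p*(n)}. -/
def suppDim (g : I → ℤ) (z : LP I) : {i // i ∈ Iuf} → ℕ :=
  fun kk => sSup {d : ℕ | ∃ n : {i // i ∈ Iuf} → ℕ, coeff z (g + pstarN Iuf Bt n) ≠ 0 ∧ n kk = d}

end CAFreeze

theorem Submodule.mul_mem_span_of_mul_mem {R A : Type*} [CommSemiring R] [Semiring A]
    [Algebra R A] {S : Set A} (hS : ∀ x ∈ S, ∀ y ∈ S, x * y ∈ Submodule.span R S) {a b : A}
    (ha : a ∈ Submodule.span R S) (hb : b ∈ Submodule.span R S) :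
    a * b ∈ Submodule.span R S := by
  have hab := Submodule.mul_mem_mul ha hb
  rw [Submodule.span_mul_span] at hab
  exact Submodule.span_le.2 (Set.mul_subset_iff.2 hS) hab

namespace CAFreeze

variable {I : Type*} {Iuf : Finset I} {Bt : I → {i // i ∈ Iuf} → ℤ}

lemma pstarN_add (n n' : {i // i ∈ Iuf} → ℕ) :
    pstarN Iuf Bt (n + n') = pstarN Iuf Bt n + pstarN Iuf Bt n' := by
  ext i
  simp only [pstarN, pstar, Pi.add_apply, Nat.cast_add, mul_add, Finset.sum_add_distrib]

lemma pstarN_zero : pstarN Iuf Bt 0 = 0 := by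
  ext i
  simp [pstarN, pstar]

lemma pstarN_injective (hfull : Function.Injective (pstar Iuf Bt)) :
    Function.Injective (pstarN Iuf Bt) := fun _ _ h =>
  funext fun k => Int.ofNat_injective (congrFun (hfull h) k)

lemma suppn_add (n n' : {i // i ∈ Iuf} → ℕ) :
    suppn Iuf (n + n') = suppn Iuf n ∪ suppn Iuf n' := by
  ext i
  simp only [suppn, Set.mem_ofPred_eq, Set.mem_union, Pi.add_apply, ne_eq, Nat.add_eq_zero_iff,
    not_and_or, exists_or]

lemma suppn_add_inter_eq_empty_iff (n n' : {i // i ∈ Iuf} → ℕ) (F : Set I) :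
    suppn Iuf (n + n') ∩ F = ∅ ↔ suppn Iuf n ∩ F = ∅ ∧ suppn Iuf n' ∩ F = ∅ := by
  rw [suppn_add, Set.union_inter_distrib_right, Set.union_empty_iff]

variable (Iuf Bt) in
def cone (m : I → ℤ) : Set (I → ℤ) := {e | ∃ n, e = m + pstarN Iuf Bt n}

lemma self_mem_cone (m : I → ℤ) : m ∈ cone Iuf Bt m :=
  ⟨0, by rw [pstarN_zero, add_zero]⟩

lemma cone_subset_cone {m m' : I → ℤ} (h : m' ∈ cone Iuf Bt m) :
    cone Iuf Bt m' ⊆ cone Iuf Bt m := by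
  rintro _ ⟨n, rfl⟩
  obtain ⟨n', rfl⟩ := h
  exact ⟨n' + n, by rw [pstarN_add, add_assoc]⟩

lemma eq_of_mem_cone_of_mem_cone (hfull : Function.Injective (pstar Iuf Bt)) {m m' : I → ℤ}
    (h : m' ∈ cone Iuf Bt m) (h' : m ∈ cone Iuf Bt m') : m' = m := by
  obtain ⟨n, rfl⟩ := h
  obtain ⟨n', hn'⟩ := h'
  have hsum : pstarN Iuf Bt (n + n') = pstarN Iuf Bt 0 := by
    rw [pstarN_add, pstarN_zero]
    linear_combination (norm := abel) -hn'
  have hn : n = 0 := by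
    ext k
    have := congrFun (pstarN_injective hfull hsum) k
    simp only [Pi.add_apply, Pi.zero_apply] at this ⊢
    omega
  rw [hn, pstarN_zero, add_zero]

lemma LPle_eq_supported (m : I → ℤ) :
    LPle Iuf Bt m = AddMonoidAlgebra.supported ℤ ℤ (cone Iuf Bt m) := by
  rw [AddMonoidAlgebra.supported_eq_span_single, LPle, cone]
  congr 1
  ext z
  simp [mono, eq_comm, AddMonoidAlgebra.ofCoeff_single]

lemma Pointed.mem_LPle {g : I → ℤ} {z : LP I} (hz : Pointed Iuf Bt g z) : z ∈ LPle Iuf Bt g := by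
  rw [LPle_eq_supported, AddMonoidAlgebra.mem_supported]
  exact hz.2

lemma mono_mul_mono (e e' : I → ℤ) : (mono e * mono e' : LP I) = mono (e + e') :=
  AddMonoidAlgebra.single_mul_single ..

lemma LPle_mul_le (m₁ m₂ : I → ℤ) : LPle Iuf Bt m₁ * LPle Iuf Bt m₂ ≤ LPle Iuf Bt (m₁ + m₂) := by
  rw [LPle, LPle, Submodule.span_mul_span, Submodule.span_le, Set.mul_subset_iff]
  rintro _ ⟨n₁, rfl⟩ _ ⟨n₂, rfl⟩
  refine Submodule.subset_span ⟨n₁ + n₂, ?_⟩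
  rw [mono_mul_mono, pstarN_add, add_add_add_comm]

variable (Iuf Bt) in
def frzLinearMap (F : Finset I) (m : I → ℤ) : LP I →ₗ[ℤ] LP I where
  toFun := frz Iuf Bt F m
  map_add' _ _ := by simp only [frz, AddMonoidAlgebra.coeff_add, Finsupp.filter_add]; rfl
  map_smul' _ _ := by simp only [frz, AddMonoidAlgebra.coeff_smul, Finsupp.filter_smul]; rfl

@[simp]
lemma frzLinearMap_apply (F : Finset I) (m : I → ℤ) (z : LP I) :
    frzLinearMap Iuf Bt F m z = frz Iuf Bt F m z := rfl

lemma frz_mono (hfull : Function.Injective (pstar Iuf Bt)) (F : Finset I) (m : I → ℤ)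
    (n : {i // i ∈ Iuf} → ℕ) :
    frz Iuf Bt F m (mono (m + pstarN Iuf Bt n)) =
      if suppn Iuf n ∩ (F : Set I) = ∅ then mono (m + pstarN Iuf Bt n) else 0 := by
  classical
  have hkeep : (∃ n', m + pstarN Iuf Bt n = m + pstarN Iuf Bt n' ∧ suppn Iuf n' ∩ (F : Set I) = ∅)
      ↔ suppn Iuf n ∩ (F : Set I) = ∅ :=
    ⟨fun ⟨n', hn', h⟩ => pstarN_injective hfull (add_left_cancel hn') ▸ h, fun h => ⟨n, rfl, h⟩⟩
  split_ifs with h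
  · exact congrArg AddMonoidAlgebra.ofCoeff (Finsupp.filter_single_of_pos _ (hkeep.2 h))
  · exact congrArg AddMonoidAlgebra.ofCoeff (Finsupp.filter_single_of_neg _ (mt hkeep.1 h))

lemma frz_eq_ite_of_mem_LPle (hfull : Function.Injective (pstar Iuf Bt)) (F : Finset I)
    {m : I → ℤ} (ν : {i // i ∈ Iuf} → ℕ) {z : LP I}
    (hz : z ∈ LPle Iuf Bt (m + pstarN Iuf Bt ν)) :
    frz Iuf Bt F m z =
      if suppn Iuf ν ∩ (F : Set I) = ∅ then frz Iuf Bt F (m + pstarN Iuf Bt ν) z else 0 := by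
  have hmono (n : {i // i ∈ Iuf} → ℕ) :
      frz Iuf Bt F m (mono (m + pstarN Iuf Bt ν + pstarN Iuf Bt n)) =
        if suppn Iuf ν ∩ (F : Set I) = ∅ then
          frz Iuf Bt F (m + pstarN Iuf Bt ν) (mono (m + pstarN Iuf Bt ν + pstarN Iuf Bt n))
        else 0 := by
    have h := frz_mono hfull F m (ν + n)
    rw [pstarN_add, ← add_assoc] at h
    simp only [h, frz_mono hfull, suppn_add_inter_eq_empty_iff, ite_and]
  split_ifs with hν
  · refine LinearMap.eqOn_span (f := frzLinearMap Iuf Bt F m)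
      (g := frzLinearMap Iuf Bt F (m + pstarN Iuf Bt ν)) ?_ hz
    rintro _ ⟨n, rfl⟩
    simpa [hν] using hmono n
  · refine LinearMap.eqOn_span (f := frzLinearMap Iuf Bt F m) (g := 0) ?_ hz
    rintro _ ⟨n, rfl⟩
    simpa [hν] using hmono n

lemma frz_mul (hfull : Function.Injective (pstar Iuf Bt)) (F : Finset I) {m₁ m₂ : I → ℤ}
    {z₁ z₂ : LP I} (hz₁ : z₁ ∈ LPle Iuf Bt m₁) (hz₂ : z₂ ∈ LPle Iuf Bt m₂) :
    frz Iuf Bt F (m₁ + m₂) (z₁ * z₂) = frz Iuf Bt F m₁ z₁ * frz Iuf Bt F m₂ z₂ := by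
  have hmono (n₁ n₂ : {i // i ∈ Iuf} → ℕ) :
      frz Iuf Bt F (m₁ + m₂) (mono (m₁ + pstarN Iuf Bt n₁) * mono (m₂ + pstarN Iuf Bt n₂)) =
        frz Iuf Bt F m₁ (mono (m₁ + pstarN Iuf Bt n₁)) *
          frz Iuf Bt F m₂ (mono (m₂ + pstarN Iuf Bt n₂)) := by
    have h := frz_mono hfull F (m₁ + m₂) (n₁ + n₂)
    rw [pstarN_add, add_add_add_comm, ← mono_mul_mono] at h
    simp only [h, frz_mono hfull, suppn_add_inter_eq_empty_iff, ite_zero_mul_ite_zero]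
  refine LinearMap.eqOn_span (f := frzLinearMap Iuf Bt F (m₁ + m₂) ∘ₗ LinearMap.mulLeft ℤ z₁)
    (g := LinearMap.mulLeft ℤ (frz Iuf Bt F m₁ z₁) ∘ₗ frzLinearMap Iuf Bt F m₂) ?_ hz₂
  rintro _ ⟨n₂, rfl⟩
  refine LinearMap.eqOn_span
    (f := frzLinearMap Iuf Bt F (m₁ + m₂) ∘ₗ LinearMap.mulRight ℤ (mono (m₂ + pstarN Iuf Bt n₂)))
    (g := LinearMap.mulRight ℤ (frz Iuf Bt F m₂ (mono (m₂ + pstarN Iuf Bt n₂))) ∘ₗ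
      frzLinearMap Iuf Bt F m₁) ?_ hz₁
  rintro _ ⟨n₁, rfl⟩
  exact hmono n₁ n₂

lemma Pointed.coeff_eq_zero {g e : I → ℤ} {z : LP I} (hz : Pointed Iuf Bt g z)
    (he : e ∉ cone Iuf Bt g) : coeff z e = 0 :=
  Finsupp.notMem_support_iff.1 (mt (hz.2 e) he)

lemma coeff_finsuppSum_pointed {s : (I → ℤ) → LP I} {b : (I → ℤ) →₀ ℤ}
    (hs : ∀ g ∈ b.support, Pointed Iuf Bt g (s g)) {g₀ : I → ℤ} (hg₀ : g₀ ∈ b.support)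
    (hmax : ∀ g ∈ b.support, g₀ ∈ cone Iuf Bt g → g = g₀) :
    coeff (b.sum fun g a => a • s g) g₀ = b g₀ := by
  rw [coeff, AddMonoidAlgebra.coeff_finsuppSum, Finsupp.sum_apply, Finsupp.sum,
    Finset.sum_eq_single g₀]
  · simp only [AddMonoidAlgebra.coeff_smul, Finsupp.smul_apply, smul_eq_mul]
    rw [show (s g₀).coeff g₀ = 1 from (hs g₀ hg₀).1, mul_one]
  · intro g hg hne
    simp only [AddMonoidAlgebra.coeff_smul, Finsupp.smul_apply, smul_eq_mul]
    rw [show (s g).coeff g₀ = 0 from (hs g hg).coeff_eq_zero (mt (hmax g hg) hne), mul_zero]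
  · exact fun h => absurd hg₀ h

lemma mem_cone_of_mul_eq_finsuppSum (hfull : Function.Injective (pstar Iuf Bt))
    {Θ : Set (I → ℤ)} {s : (I → ℤ) → LP I} (hs : ∀ g ∈ Θ, Pointed Iuf Bt g (s g))
    {g₁ g₂ : I → ℤ} (hg₁ : g₁ ∈ Θ) (hg₂ : g₂ ∈ Θ) {b : (I → ℤ) →₀ ℤ}
    (hb : (b.support : Set (I → ℤ)) ⊆ Θ) (hprod : s g₁ * s g₂ = b.sum fun g a => a • s g)
    {g : I → ℤ} (hg : g ∈ b.support) : g ∈ cone Iuf Bt (g₁ + g₂) := by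
  classical
  by_contra hg_out
  obtain ⟨g₀, hg₀, hmax⟩ := (b.support.filter (· ∉ cone Iuf Bt (g₁ + g₂))).exists_maximalFor
    (cone Iuf Bt) ⟨g, Finset.mem_filter.2 ⟨hg, hg_out⟩⟩
  obtain ⟨hg₀b, hg₀_out⟩ := Finset.mem_filter.1 hg₀
  have hprod_mem : s g₁ * s g₂ ∈ LPle Iuf Bt (g₁ + g₂) :=
    LPle_mul_le g₁ g₂ (Submodule.mul_mem_mul (hs g₁ hg₁).mem_LPle (hs g₂ hg₂).mem_LPle)
  rw [LPle_eq_supported, AddMonoidAlgebra.mem_supported'] at hprod_mem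
  have hcoeff : coeff (b.sum fun g a => a • s g) g₀ = b g₀ := by
    refine coeff_finsuppSum_pointed (fun g hg => hs g (hb hg)) hg₀b fun g' hg' hg₀g' => ?_
    have hg'_out : g' ∉ cone Iuf Bt (g₁ + g₂) := fun h => hg₀_out (cone_subset_cone h hg₀g')
    have hcone := hmax (Finset.mem_filter.2 ⟨hg', hg'_out⟩) (cone_subset_cone hg₀g')
    exact eq_of_mem_cone_of_mem_cone hfull (hcone (self_mem_cone g')) hg₀g'
  exact Finsupp.mem_support_iff.1 hg₀b (hcoeff ▸ hprod ▸ hprod_mem g₀ hg₀_out)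

lemma frz_mul_frz_eq_finsuppSum (hfull : Function.Injective (pstar Iuf Bt)) (F : Finset I)
    {m₁ m₂ : I → ℤ} {z₁ z₂ : LP I} (hz₁ : z₁ ∈ LPle Iuf Bt m₁) (hz₂ : z₂ ∈ LPle Iuf Bt m₂)
    {s : (I → ℤ) → LP I} {b : (I → ℤ) →₀ ℤ} (hprod : z₁ * z₂ = b.sum fun g a => a • s g) :
    frz Iuf Bt F m₁ z₁ * frz Iuf Bt F m₂ z₂ =
      b.sum fun g a => a • frz Iuf Bt F (m₁ + m₂) (s g) := by
  rw [← frz_mul hfull F hz₁ hz₂, hprod]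
  simp only [← frzLinearMap_apply, map_finsuppSum, map_zsmul]

lemma frz_eq_zero_or_eq_of_mul_eq_finsuppSum (hfull : Function.Injective (pstar Iuf Bt))
    (F : Finset I) {Θ : Set (I → ℤ)} {s : (I → ℤ) → LP I} (hs : ∀ g ∈ Θ, Pointed Iuf Bt g (s g))
    {g₁ g₂ : I → ℤ} (hg₁ : g₁ ∈ Θ) (hg₂ : g₂ ∈ Θ) {b : (I → ℤ) →₀ ℤ}
    (hb : (b.support : Set (I → ℤ)) ⊆ Θ) (hprod : s g₁ * s g₂ = b.sum fun g a => a • s g)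
    {g : I → ℤ} (hg : b g ≠ 0) :
    frz Iuf Bt F (g₁ + g₂) (s g) = 0 ∨ frz Iuf Bt F (g₁ + g₂) (s g) = frz Iuf Bt F g (s g) := by
  have hgΘ := hb (Finsupp.mem_support_iff.2 hg)
  obtain ⟨ν, rfl⟩ := mem_cone_of_mul_eq_finsuppSum hfull hs hg₁ hg₂ hb hprod
    (Finsupp.mem_support_iff.2 hg)
  rw [frz_eq_ite_of_mem_LPle hfull F ν (hs _ hgΘ).mem_LPle]
  split_ifs <;> simp

end CAFreeze

namespace CAFreeze

variable {I : Type*} [Fintype I] [DecidableEq I]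

variable (Iuf : Finset I) (Bt : I → {i // i ∈ Iuf} → ℤ)

theorem frz_module_closed_under_mul (hfull : Function.Injective (pstar Iuf Bt))
    (F : Finset I)
    (Θ : Set (I → ℤ)) (s : (I → ℤ) → LP I)
    (hs : ∀ g ∈ Θ, Pointed Iuf Bt g (s g))
    -- A^Θ is closed under multiplication
    (hclosed : ∀ a ∈ Submodule.span ℤ (s '' Θ), ∀ b ∈ Submodule.span ℤ (s '' Θ),
      a * b ∈ Submodule.span ℤ (s '' Θ)) :
    -- frz_F^S A^Θ is closed under multiplication
    (∀ a ∈ Submodule.span ℤ ((fun g => frz Iuf Bt F g (s g)) '' Θ),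
      ∀ b ∈ Submodule.span ℤ ((fun g => frz Iuf Bt F g (s g)) '' Θ),
        a * b ∈ Submodule.span ℤ ((fun g => frz Iuf Bt F g (s g)) '' Θ)) ∧
    -- more precisely:
    (∀ g₁ ∈ Θ, ∀ g₂ ∈ Θ, ∀ b : (I → ℤ) →₀ ℤ, (b.support : Set (I → ℤ)) ⊆ Θ →
      s g₁ * s g₂ = (b.sum fun g a => a • s g) →
      (frz Iuf Bt F g₁ (s g₁) * frz Iuf Bt F g₂ (s g₂) =
        (b.sum fun g a => a • frz Iuf Bt F (g₁ + g₂) (s g))) ∧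
      ∀ g, b g ≠ 0 → frz Iuf Bt F (g₁ + g₂) (s g) = 0 ∨
        frz Iuf Bt F (g₁ + g₂) (s g) = frz Iuf Bt F g (s g)) := by
  refine ⟨fun a ha c hc => Submodule.mul_mem_span_of_mul_mem ?_ ha hc,
    fun g₁ hg₁ g₂ hg₂ b hb hprod =>
      ⟨frz_mul_frz_eq_finsuppSum hfull F (hs g₁ hg₁).mem_LPle (hs g₂ hg₂).mem_LPle hprod,
        fun g => frz_eq_zero_or_eq_of_mul_eq_finsuppSum hfull F hs hg₁ hg₂ hb hprod⟩⟩
  rintro _ ⟨g₁, hg₁, rfl⟩ _ ⟨g₂, hg₂, rfl⟩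
  obtain ⟨b, hb, hprod⟩ := (Finsupp.mem_span_image_iff_linearCombination ℤ).1
    (hclosed _ (Submodule.subset_span ⟨g₁, hg₁, rfl⟩) _ (Submodule.subset_span ⟨g₂, hg₂, rfl⟩))
  rw [Finsupp.mem_supported] at hb
  rw [frz_mul_frz_eq_finsuppSum hfull F (hs g₁ hg₁).mem_LPle (hs g₂ hg₂).mem_LPle hprod.symm]
  refine Submodule.finsuppSum_mem _ _ _ _ fun g hg => ?_
  rcases frz_eq_zero_or_eq_of_mul_eq_finsuppSum hfull F hs hg₁ hg₂ hb hprod.symm hg with h | h <;>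
    rw [h]
  · rw [smul_zero]
    exact Submodule.zero_mem _
  · exact Submodule.smul_mem _ _
      (Submodule.subset_span ⟨g, hb (Finsupp.mem_support_iff.2 hg), rfl⟩)

end CAFreeze
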